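/- (Newton–Maclaurin inequality) If λ ∈ Γ_k (the Garding cone, i.e., σ_i(λ) > 0 for all 1 ≤ i ≤ k) and 1 ≤ l ≤ k ≤ n-1, then (σ_k(λ)/C(n-1,k))^{1/k} ≤ (σ_l(λ)/C(n-1,l))^{1/l}. -/

import Mathlib

noncomputable def esymmFin (m k : ℕ) (l : Fin m → ℝ) : ℝ :=
  ∑ s ∈ Finset.powersetCard k (Finset.univ : Finset (Fin m)), ∏ i ∈ s, l i

/-!
Write `E j = σ_j / C(m, j)` for the normalized elementary symmetric means of `m` reals. The key
step is Newton's inequality `E i * E (i + 2) ≤ E (i + 1) ^ 2`. Differentiating `∏ (X + a)` keeps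
all roots real (Rolle) and leaves `E 0, …, E (m - 1)` unchanged, so it suffices to treat
`m = i + 2`. There, replacing each `a` by `a⁻¹` turns `E j` into `E (m - j) / ∏ a`, which reduces
the inequality to `E 2 ≤ E 1 ^ 2`, i.e. to Cauchy–Schwarz. A positive log-concave sequence with
`E 0 = 1` satisfies `E (i + 1) ^ i ≤ E i ^ (i + 1)`, so `E j ^ (1 / j)` is antitone on `[1, k]`.
-/

open Polynomial

namespace Multiset

section CommSemiring

variable {R : Type*} [CommSemiring R]

theorem esymm_zero (s : Multiset R) : s.esymm 0 = 1 := by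
  simp [esymm, powersetCard_zero_left]

theorem esymm_one (s : Multiset R) : s.esymm 1 = s.sum := by
  simp [esymm, powersetCard_one, map_map]

theorem esymm_card (s : Multiset R) : s.esymm (card s) = s.prod := by
  simp [esymm, powersetCard_self]

theorem esymm_eq_zero_of_card_lt {s : Multiset R} {j : ℕ} (h : card s < j) : s.esymm j = 0 := by
  simp [esymm, powersetCard_eq_empty _ h]

theorem esymm_cons_succ (a : R) (s : Multiset R) (j : ℕ) :
    (a ::ₘ s).esymm (j + 1) = s.esymm (j + 1) + a * s.esymm j := by
  simp [esymm, powersetCard_cons, map_map, ← sum_map_mul_left]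

end CommSemiring

theorem sq_sum_eq_sum_sq_add_two_mul_esymm_two {R : Type*} [CommRing R] (s : Multiset R) :
    s.sum ^ 2 = (s.map (· ^ 2)).sum + 2 * s.esymm 2 := by
  induction s using Multiset.induction_on with
  | empty => simp [esymm_eq_zero_of_card_lt (s := (0 : Multiset R)) (j := 2) (by simp)]
  | cons a s ih =>
    rw [sum_cons, map_cons, sum_cons, esymm_cons_succ, esymm_one]
    linear_combination ih

theorem esymm_map_inv_mul_prod {K : Type*} [Field K] {s : Multiset K} (hs : (0 : K) ∉ s)
    {j k : ℕ} (hjk : j + k = card s) : (s.map (·⁻¹)).esymm j * s.prod = s.esymm k := by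
  induction s using Multiset.induction_on generalizing j k with
  | empty =>
    obtain ⟨rfl, rfl⟩ : j = 0 ∧ k = 0 := by simpa using hjk
    simp [esymm_zero]
  | cons a s ih =>
    have ha : a ≠ 0 := fun h => hs (h ▸ mem_cons_self a s)
    have hs' : (0 : K) ∉ s := fun h => hs (mem_cons_of_mem h)
    rw [card_cons] at hjk
    rw [map_cons, prod_cons]
    rcases j with _ | j
    · obtain rfl : k = card (a ::ₘ s) := by simpa using hjk
      rw [esymm_zero, esymm_card, prod_cons, one_mul]
    · have h' : (s.map (·⁻¹)).esymm j * s.prod = s.esymm k := ih hs' (by omega)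
      rw [esymm_cons_succ]
      rcases k with _ | k
      · rw [esymm_eq_zero_of_card_lt (by simp; omega), esymm_zero]
        rw [zero_add, mul_mul_mul_comm, inv_mul_cancel₀ ha, h', one_mul, esymm_zero]
      · rw [esymm_cons_succ, ← ih hs' (by omega : j + 1 + k = card s), ← h']
        linear_combination ((s.map (·⁻¹)).esymm j * s.prod) * inv_mul_cancel₀ ha

theorem sq_sum_le_card_mul_sum_sq {R : Type*} [CommRing R] [LinearOrder R] [IsStrictOrderedRing R]
    (s : Multiset R) : s.sum ^ 2 ≤ card s * (s.map (· ^ 2)).sum := by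
  have h :=
    _root_.sq_sum_le_card_mul_sum_sq (s := (Finset.univ : Finset s)) (f := fun x => (x : R))
  rw [Finset.card_univ, card_coe, Finset.sum_eq_multiset_sum, Finset.sum_eq_multiset_sum,
    map_univ_coe] at h
  rwa [← map_univ s (· ^ 2)]

end Multiset

namespace Polynomial

theorem Splits.derivative {p : ℝ[X]} (hp : p.Splits) : p.derivative.Splits := by
  rw [splits_iff_card_roots] at hp ⊢
  refine le_antisymm (card_roots' _) ?_
  have := card_roots_le_derivative p
  rw [natDegree_derivative]
  omega

theorem Splits.coeff_natDegree_sub_eq_leadingCoeff_mul_esymm {K : Type*} [Field K] {p : K[X]}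
    (hp : p.Splits) {j : ℕ} (hj : j ≤ p.natDegree) :
    p.coeff (p.natDegree - j) = p.leadingCoeff * (p.roots.map Neg.neg).esymm j := by
  rw [coeff_eq_esymm_roots_of_splits hp tsub_le_self, Nat.sub_sub_self hj, Multiset.esymm_neg,
    mul_assoc]

end Polynomial

namespace Multiset

noncomputable def esymmMean (s : Multiset ℝ) (j : ℕ) : ℝ :=
  s.esymm j / (card s).choose j

theorem esymmMean_zero (s : Multiset ℝ) : s.esymmMean 0 = 1 := by
  simp [esymmMean, esymm_zero]

theorem esymmMean_card (s : Multiset ℝ) : s.esymmMean (card s) = s.prod := by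
  simp [esymmMean, esymm_card]

theorem esymmMean_eq_esymmMean_map_inv_mul_prod {s : Multiset ℝ} (hs : (0 : ℝ) ∉ s) {j k : ℕ}
    (hjk : j + k = card s) : s.esymmMean k = (s.map (·⁻¹)).esymmMean j * s.prod := by
  rw [esymmMean, esymmMean, card_map, ← esymm_map_inv_mul_prod hs hjk, div_mul_eq_mul_div,
    ← hjk, Nat.choose_symm_add]

theorem esymmMean_two_le_sq_esymmMean_one (s : Multiset ℝ) :
    s.esymmMean 2 ≤ s.esymmMean 1 ^ 2 := by
  rcases lt_or_ge (card s) 2 with hs | hs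
  · simp [esymmMean, esymm_eq_zero_of_card_lt hs, sq_nonneg]
  have hn : (2 : ℝ) ≤ card s := by exact_mod_cast hs
  have hsq := sq_sum_eq_sum_sq_add_two_mul_esymm_two s
  have hcs := sq_sum_le_card_mul_sum_sq s
  rw [esymmMean, esymmMean, esymm_one, Nat.cast_choose_two, Nat.choose_one_right, div_pow,
    div_div_eq_mul_div, div_le_div_iff₀ (by nlinarith) (by positivity)]
  nlinarith

theorem esymmMean_mul_esymmMean_le_sq_of_card_eq {s : Multiset ℝ} {i : ℕ} (hs : card s = i + 2) :
    s.esymmMean i * s.esymmMean (i + 2) ≤ s.esymmMean (i + 1) ^ 2 := by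
  by_cases h0 : (0 : ℝ) ∈ s
  · rw [← hs, esymmMean_card, prod_eq_zero h0, mul_zero]
    positivity
  set t := s.map (·⁻¹)
  have hi : s.esymmMean i = t.esymmMean 2 * s.prod :=
    esymmMean_eq_esymmMean_map_inv_mul_prod h0 (by omega)
  have hi1 : s.esymmMean (i + 1) = t.esymmMean 1 * s.prod :=
    esymmMean_eq_esymmMean_map_inv_mul_prod h0 (by omega)
  have hi2 : s.esymmMean (i + 2) = s.prod := by rw [← hs, esymmMean_card]
  rw [hi, hi1, hi2, mul_assoc, mul_pow, ← sq]
  exact mul_le_mul_of_nonneg_right (esymmMean_two_le_sq_esymmMean_one t) (sq_nonneg _)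

theorem exists_card_eq_esymmMean_eq {s : Multiset ℝ} {m : ℕ} (hs : card s = m + 1) :
    ∃ t : Multiset ℝ, card t = m ∧ ∀ j ≤ m, t.esymmMean j = s.esymmMean j := by
  set P : ℝ[X] := (s.map (X + C ·)).prod
  have hP : P.Monic := monic_multiset_prod_of_monic _ _ fun a _ => monic_X_add_C a
  have hPdeg : P.natDegree = m + 1 := by
    rw [natDegree_multiset_prod_of_monic _ fun f hf => by
      obtain ⟨a, -, rfl⟩ := mem_map.mp hf; exact monic_X_add_C a]
    simp [hs, add_comm]
  have hQ : P.derivative.Splits := (Splits.multisetProd (by simp)).derivative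
  have hQdeg : P.derivative.natDegree = m := by rw [natDegree_derivative, hPdeg]; rfl
  set t := P.derivative.roots.map Neg.neg
  have ht : card t = m := by rw [card_map, splits_iff_card_roots.mp hQ, hQdeg]
  refine ⟨t, ht, fun j hj => ?_⟩
  have hcoeff : (m + 1 : ℝ) * t.esymm j = s.esymm j * ((m - j : ℕ) + 1) := by
    have := hQ.coeff_natDegree_sub_eq_leadingCoeff_mul_esymm (j := j) (by omega)
    rw [leadingCoeff_derivative, hP.leadingCoeff, hPdeg, hQdeg, coeff_derivative,
      prod_X_add_C_coeff s (by omega), hs, show m + 1 - (m - j + 1) = j by omega, one_mul] at this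
    rw [this]
    push_cast
    ring
  have hchoose : (m.choose j : ℝ) * (m + 1) = (m + 1).choose j * ((m - j : ℕ) + 1) := by
    have := Nat.choose_mul_succ_eq m j
    rw [Nat.sub_add_comm hj] at this
    exact_mod_cast this
  rw [esymmMean, esymmMean, ht, hs, div_eq_div_iff (by exact_mod_cast (Nat.choose_pos hj).ne')
    (by exact_mod_cast (Nat.choose_pos (by omega)).ne')]
  apply mul_left_cancel₀ (by positivity : (m + 1 : ℝ) ≠ 0)
  linear_combination ((m + 1).choose j : ℝ) * hcoeff - s.esymm j * hchoose

theorem esymmMean_mul_esymmMean_le_sq {s : Multiset ℝ} {i : ℕ} (hs : i + 2 ≤ card s) :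
    s.esymmMean i * s.esymmMean (i + 2) ≤ s.esymmMean (i + 1) ^ 2 := by
  obtain ⟨d, hd⟩ := Nat.exists_eq_add_of_le hs
  induction d generalizing s with
  | zero => exact esymmMean_mul_esymmMean_le_sq_of_card_eq hd
  | succ d ih =>
    obtain ⟨t, ht, hts⟩ := exists_card_eq_esymmMean_eq (m := i + 2 + d) hd
    rw [← hts i (by omega), ← hts (i + 1) (by omega), ← hts (i + 2) (by omega)]
    exact ih (by omega) ht

end Multiset

section LogConcave

variable {p : ℕ → ℝ} {K : ℕ}

theorem pow_succ_le_pow_of_mul_le_sq (hp0 : 1 ≤ p 0) (hpos : ∀ j ≤ K, 0 < p j)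
    (hp : ∀ i, i + 2 ≤ K → p i * p (i + 2) ≤ p (i + 1) ^ 2) {i : ℕ} (hi : i + 1 ≤ K) :
    p (i + 1) ^ i ≤ p i ^ (i + 1) := by
  induction i with
  | zero => simpa using hp0
  | succ i ih =>
    have h0 := hpos i (by omega)
    have h1 := hpos (i + 1) (by omega)
    have h2 := hpos (i + 2) (by omega)
    refine le_of_mul_le_mul_right ?_ (pow_pos h1 i)
    calc p (i + 2) ^ (i + 1) * p (i + 1) ^ i
        ≤ p (i + 2) ^ (i + 1) * p i ^ (i + 1) := by gcongr; exact ih (by omega)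
      _ = (p i * p (i + 2)) ^ (i + 1) := by ring
      _ ≤ (p (i + 1) ^ 2) ^ (i + 1) := by gcongr; exact hp i hi
      _ = p (i + 1) ^ (i + 1 + 1) * p (i + 1) ^ i := by ring

theorem rpow_one_div_le_rpow_one_div_of_pow_le {a b : ℝ} {k l : ℕ} (ha : 0 ≤ a) (hb : 0 ≤ b)
    (hk : k ≠ 0) (hl : l ≠ 0) (h : a ^ l ≤ b ^ k) : a ^ ((1 : ℝ) / k) ≤ b ^ ((1 : ℝ) / l) := by
  have key {x : ℝ} {m n : ℕ} (hx : 0 ≤ x) (hn : n ≠ 0) :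
      x ^ ((1 : ℝ) / m) = (x ^ n) ^ ((1 : ℝ) / (m * n)) := by
    rw [← Real.rpow_natCast, ← Real.rpow_mul hx]
    field_simp
  rw [key ha hl, key hb hk, mul_comm (l : ℝ)]
  exact Real.rpow_le_rpow (pow_nonneg ha _) h (by positivity)

theorem antitoneOn_rpow_one_div_of_mul_le_sq (hp0 : 1 ≤ p 0) (hpos : ∀ j ≤ K, 0 < p j)
    (hp : ∀ i, i + 2 ≤ K → p i * p (i + 2) ≤ p (i + 1) ^ 2) :
    AntitoneOn (fun j => p j ^ ((1 : ℝ) / j)) (Set.Icc 1 K) := by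
  refine antitoneOn_of_succ_le Set.ordConnected_Icc fun i _ hi hi1 => ?_
  simp only [Order.succ_eq_add_one, Set.mem_Icc] at hi hi1 ⊢
  exact rpow_one_div_le_rpow_one_div_of_pow_le (hpos _ hi1.2).le (hpos _ hi.2).le
    (by omega) (by omega) (pow_succ_le_pow_of_mul_le_sq hp0 hpos hp hi1.2)

end LogConcave

/-- Newton–Maclaurin inequality: for λ in the Garding cone Γ_k and 1 ≤ l ≤ k ≤ n-1,
(σ_k(λ)/C(n-1,k))^{1/k} ≤ (σ_l(λ)/C(n-1,l))^{1/l}. -/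
theorem newton_maclaurin (n k l : ℕ) (hl : 1 ≤ l) (hlk : l ≤ k) (hk : k ≤ n - 1)
    (lam : Fin (n - 1) → ℝ)
    (hGamma : ∀ i : ℕ, 1 ≤ i → i ≤ k → 0 < esymmFin (n - 1) i lam) :
    (esymmFin (n - 1) k lam / (Nat.choose (n - 1) k : ℝ)) ^ ((1 : ℝ) / k) ≤
      (esymmFin (n - 1) l lam / (Nat.choose (n - 1) l : ℝ)) ^ ((1 : ℝ) / l) := by
  set s : Multiset ℝ := Finset.univ.val.map lam
  have hcard : Multiset.card s = n - 1 := by simp [s]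
  have hmean : ∀ j, s.esymmMean j = esymmFin (n - 1) j lam / (n - 1).choose j := by
    intro j
    rw [Multiset.esymmMean, Finset.esymm_map_val, hcard]
    rfl
  have hpos : ∀ j ≤ k, 0 < s.esymmMean j := by
    intro j hj
    rcases Nat.eq_zero_or_pos j with rfl | hj0
    · exact s.esymmMean_zero ▸ one_pos
    · rw [hmean]
      exact div_pos (hGamma j hj0 hj) (by exact_mod_cast Nat.choose_pos (hj.trans hk))
  have hnewton :
      ∀ i, i + 2 ≤ k → s.esymmMean i * s.esymmMean (i + 2) ≤ s.esymmMean (i + 1) ^ 2 :=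
    fun i hi => Multiset.esymmMean_mul_esymmMean_le_sq (by omega)
  have hanti := antitoneOn_rpow_one_div_of_mul_le_sq s.esymmMean_zero.ge hpos hnewton
    ⟨hl, hlk⟩ ⟨hl.trans hlk, le_rfl⟩ hlk
  simpa only [hmean] using hanti
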